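/- arXiv:2010.00811 — 13 statements merged into one kernel-verified Lean document; each statement's English description precedes it below -/
import Mathlib

section
/- For all sets X, Y, every function f : X → Y and every family 𝒜 of subsets of X, the map δ commutes with taking double direct images: δ_Y({f[A] | A ∈ 𝒜}) = {f[B] | B ∈ δ_X(𝒜)}. In other words, δ is a natural transformation from the composite powerset functor PP to itself. -/
/-!
Direct images preserve both defining conditions of `δ`, which gives `⊇`. Conversely, for
`B ∈ δ_Y(f[𝒜])` the set `f⁻¹[B] ∩ ⋃₀ 𝒜` lies in `δ_X(𝒜)`, and since `B ⊆ ⋃₀ f[𝒜] = f[⋃₀ 𝒜]`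
its image is exactly `B`.
-/

/-- The canonical weak distributive law component `δ_X : PP X → PP X`. -/
def delta {X : Type*} (𝒜 : Set (Set X)) : Set (Set X) :=
  {B | B ⊆ ⋃₀ 𝒜 ∧ ∀ A ∈ 𝒜, (A ∩ B).Nonempty}

namespace Set

variable {X Y : Type*} (f : X → Y) {𝒜 : Set (Set X)}

theorem image_mem_delta {B : Set X} (hB : B ∈ delta 𝒜) : f '' B ∈ delta (image f '' 𝒜) := by
  obtain ⟨hB_sub, hB_meets⟩ := hB
  refine ⟨image_sUnion ▸ image_mono hB_sub, ?_⟩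
  rintro _ ⟨A, hA, rfl⟩
  obtain ⟨x, hxA, hxB⟩ := hB_meets A hA
  exact ⟨f x, mem_image_of_mem f hxA, mem_image_of_mem f hxB⟩

theorem preimage_inter_sUnion_mem_delta {B : Set Y} (hB : B ∈ delta (image f '' 𝒜)) :
    f ⁻¹' B ∩ ⋃₀ 𝒜 ∈ delta 𝒜 := by
  refine ⟨inter_subset_right, fun A hA => ?_⟩
  obtain ⟨_, ⟨x, hxA, rfl⟩, hfxB⟩ := hB.2 (f '' A) (mem_image_of_mem _ hA)
  exact ⟨x, hxA, hfxB, subset_sUnion_of_mem hA hxA⟩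

theorem image_preimage_inter_sUnion_of_mem_delta {B : Set Y} (hB : B ∈ delta (image f '' 𝒜)) :
    f '' (f ⁻¹' B ∩ ⋃₀ 𝒜) = B := by
  rw [image_preimage_inter, image_sUnion]
  exact inter_eq_left.mpr hB.1

end Set

/-- δ is natural: it commutes with double direct images. -/
theorem delta_natural {X Y : Type*} (f : X → Y) (𝒜 : Set (Set X)) :
    delta ((Set.image f) '' 𝒜) = (Set.image f) '' delta 𝒜 := by
  ext B
  constructor
  · intro hB
    exact ⟨_, Set.preimage_inter_sUnion_mem_delta f hB,
      Set.image_preimage_inter_sUnion_of_mem_delta f hB⟩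
  · rintro ⟨C, hC, rfl⟩
    exact Set.image_mem_delta f hC
end

section
/- The map δ satisfies the multiplication law of the inner powerset monad (the (μT) diagram of a weak distributive law of type PP ⇒ PP): for every set X and every 𝒰 : Set (Set (Set X)), δ_X(⋃₀ 𝒰) = {⋃₀ 𝒦 | 𝒦 ∈ δ_{Set X}(δ_X '' 𝒰)}, where δ_X '' 𝒰 is the direct image of 𝒰 under δ_X. -/
/-- The (μT) diagram: δ is compatible with the multiplication of the inner powerset monad. -/
theorem delta_muT {X : Type*} (𝒰 : Set (Set (Set X))) :
    delta (⋃₀ 𝒰) = Set.sUnion '' delta (delta '' 𝒰) := by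
  ext B
  constructor
  · rintro ⟨hBsub, hBne⟩
    refine ⟨{C | ∃ 𝒜 ∈ 𝒰, C = B ∩ ⋃₀ 𝒜}, ⟨?_, ?_⟩, ?_⟩
    · rintro C ⟨𝒜, h𝒜, rfl⟩
      refine Set.mem_sUnion.2 ⟨delta 𝒜, ⟨𝒜, h𝒜, rfl⟩, ?_, ?_⟩
      · exact Set.inter_subset_right
      · intro A hA
        obtain ⟨x, hxA, hxB⟩ := hBne A ⟨𝒜, h𝒜, hA⟩
        exact ⟨x, hxA, hxB, A, hA, hxA⟩
    · rintro D ⟨𝒜, h𝒜, rfl⟩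
      exact ⟨B ∩ ⋃₀ 𝒜, ⟨Set.inter_subset_right, fun A hA => by
          obtain ⟨x, hxA, hxB⟩ := hBne A ⟨𝒜, h𝒜, hA⟩
          exact ⟨x, hxA, hxB, A, hA, hxA⟩⟩, ⟨𝒜, h𝒜, rfl⟩⟩
    · apply Set.Subset.antisymm
      · rintro x ⟨C, ⟨𝒜, h𝒜, rfl⟩, hx⟩
        exact hx.1
      · intro x hx
        obtain ⟨Y, ⟨𝒜, h𝒜, hY𝒜⟩, hxY⟩ := hBsub hx
        exact ⟨B ∩ ⋃₀ 𝒜, ⟨𝒜, h𝒜, rfl⟩, hx, Y, hY𝒜, hxY⟩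
  · rintro ⟨𝒦, ⟨h𝒦sub, h𝒦ne⟩, rfl⟩
    constructor
    · rintro x ⟨C, hC𝒦, hxC⟩
      obtain ⟨D, ⟨𝒜, h𝒜, rfl⟩, hCsub, _⟩ := h𝒦sub hC𝒦
      obtain ⟨A, hA, hxA⟩ := hCsub hxC
      exact ⟨A, ⟨𝒜, h𝒜, hA⟩, hxA⟩
    · rintro A ⟨𝒜, h𝒜, hA⟩
      obtain ⟨C, ⟨_, hCne⟩, hC𝒦⟩ := h𝒦ne (delta 𝒜) ⟨𝒜, h𝒜, rfl⟩
      obtain ⟨x, hxA, hxC⟩ := hCne A hA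
      exact ⟨x, hxA, C, hC𝒦, hxC⟩
end

section
/- The map δ satisfies the multiplication law of the outer powerset monad (the (μS) diagram of a weak distributive law of type PP ⇒ PP): for every set X and every 𝒰 : Set (Set (Set X)), δ_X({⋃₀ 𝒜 | 𝒜 ∈ 𝒰}) = ⋃₀ (δ_X '' δ_{Set X}(𝒰)), i.e. applying δ_X after taking unions memberwise equals first applying δ at Set X, then mapping δ_X over the result, then taking the union of the resulting family. -/
/-- The (μS) diagram: δ is compatible with the multiplication of the outer powerset monad. -/
theorem delta_muS {X : Type*} (𝒰 : Set (Set (Set X))) :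
    delta (Set.sUnion '' 𝒰) = ⋃₀ (delta '' delta 𝒰) := by
  ext B
  constructor
  · rintro ⟨hsub, hmeet⟩
    refine ⟨delta {A | ∃ 𝒜 ∈ 𝒰, A ∈ 𝒜 ∧ (A ∩ B).Nonempty}, ⟨_, ?_, rfl⟩, ?_, ?_⟩
    · constructor
      · rintro A ⟨𝒜, h𝒜, hA, -⟩
        exact ⟨𝒜, h𝒜, hA⟩
      · intro 𝒜 h𝒜
        obtain ⟨x, ⟨A, hA, hxA⟩, hxB⟩ := hmeet _ ⟨𝒜, h𝒜, rfl⟩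
        exact ⟨A, hA, 𝒜, h𝒜, hA, x, hxA, hxB⟩
    · intro x hx
      obtain ⟨-, ⟨𝒜, h𝒜, rfl⟩, A, hA, hxA⟩ := hsub hx
      exact ⟨A, ⟨𝒜, h𝒜, hA, x, hxA, hx⟩, hxA⟩
    · rintro A ⟨-, -, -, h⟩
      exact h
  · rintro ⟨-, ⟨ℬ, ⟨hℬU, hℬmeet⟩, rfl⟩, hBsub, hBmeet⟩
    constructor
    · intro x hx
      obtain ⟨A, hA, hxA⟩ := hBsub hx
      obtain ⟨𝒜, h𝒜, hA𝒜⟩ := hℬU hA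
      exact ⟨⋃₀ 𝒜, ⟨𝒜, h𝒜, rfl⟩, A, hA𝒜, hxA⟩
    · rintro - ⟨𝒜, h𝒜, rfl⟩
      obtain ⟨A, hA𝒜, hAℬ⟩ := hℬmeet 𝒜 h𝒜
      obtain ⟨x, hxA, hxB⟩ := hBmeet A hAℬ
      exact ⟨x, ⟨A, hA𝒜, hxA⟩, hxB⟩
end

section
/- The map δ satisfies the unit law of the outer powerset monad (the (ηS) diagram of a weak distributive law of type PP ⇒ PP): for every set X and every subset A ⊆ X, δ_X({{x} | x ∈ A}) = {A}, i.e. applying δ_X to the family of singletons of elements of A yields exactly the singleton family containing A. -/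
/-- The (ηS) diagram: applying δ to the family of singletons of elements of `A`
yields exactly `{A}`. -/
theorem delta_etaS {X : Type*} (A : Set X) :
    delta ((fun x => ({x} : Set X)) '' A) = {A} := by
  ext B
  simp only [delta, Set.mem_setOf_eq, Set.mem_singleton_iff]
  constructor
  · rintro ⟨hsub, hmeet⟩
    ext x
    constructor
    · intro hx
      obtain ⟨S, ⟨y, hy, rfl⟩, hxS⟩ := hsub hx
      simp at hxS; subst hxS; exact hy
    · intro hx
      obtain ⟨y, hy⟩ := hmeet {x} ⟨x, hx, rfl⟩
      rcases hy with ⟨hy1, hy2⟩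
      simp at hy1; subst hy1
      exact hy2
  · rintro rfl
    constructor
    · intro x hx
      exact ⟨{x}, ⟨x, hx, rfl⟩, rfl⟩
    · rintro S ⟨y, hy, rfl⟩
      exact ⟨y, rfl, hy⟩
end

section
/- Conjunctive-to-disjunctive normal form via δ: for every set X of propositional variables, every family 𝒰 : Set (Set X), and every valuation v : X → Prop, we have (∀ U ∈ 𝒰, ∃ x ∈ U, v x) if and only if (∃ V ∈ δ_X(𝒰), ∀ x ∈ V, v x). -/
/-- CNF-to-DNF: δ transforms a conjunctive normal form into an equivalent
disjunctive normal form. -/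
theorem delta_cnf_dnf {X : Type*} (𝒰 : Set (Set X)) (v : X → Prop) :
    (∀ U ∈ 𝒰, ∃ x ∈ U, v x) ↔ (∃ V ∈ delta 𝒰, ∀ x ∈ V, v x) := by
  constructor
  · intro h
    refine ⟨{x | x ∈ ⋃₀ 𝒰 ∧ v x}, ⟨fun x hx => hx.1, ?_⟩, fun x hx => hx.2⟩
    intro A hA
    obtain ⟨x, hxA, hvx⟩ := h A hA
    exact ⟨x, hxA, ⟨A, hA, hxA⟩, hvx⟩
  · rintro ⟨V, ⟨_, hV⟩, hvV⟩ U hU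
    obtain ⟨x, hxU, hxV⟩ := hV U hU
    exact ⟨x, hxU, hvV x hxV⟩
end

section
/- The Yang–Baxter diagram for (δ, σ, τ) commutes: for all sets A, X and every 𝒮 : Set (Set (Prop × (A → X))), we have Mδ_X (σ_{Set X} (τ_X '' 𝒮)) = τ_{Set X} (σ_X '' (δ_{Prop × (A → X)} 𝒮)), where τ_X '' 𝒮 and σ_X '' (⋯) denote direct images under τ_X and σ_X respectively. -/
/-- The distributive law `σ : P M ⇒ M P` of powerset over the machine functor,
taking the conjunction of outputs. -/
def sigma {A X : Type*} (S : Set (Prop × (A → X))) : Prop × (A → Set X) :=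
  ((∀ p ∈ S, p.1), fun a => (fun p : Prop × (A → X) => p.2 a) '' S)

/-- The distributive law `τ : P M ⇒ M P` of powerset over the machine functor,
taking the disjunction of outputs. -/
def tau {A X : Type*} (S : Set (Prop × (A → X))) : Prop × (A → Set X) :=
  ((∃ p ∈ S, p.1), fun a => (fun p : Prop × (A → X) => p.2 a) '' S)

/-- The action `M δ_X` of the machine functor on the component `δ_X`. -/
def Mdelta {A X : Type*} (p : Prop × (A → Set (Set X))) : Prop × (A → Set (Set X)) :=
  (p.1, fun a => delta (p.2 a))

lemma delta_image {X Y : Type*} (f : X → Y) (𝒜 : Set (Set X)) :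
    delta (Set.image f '' 𝒜) = Set.image f '' delta 𝒜 := by
  ext C
  constructor
  · rintro ⟨hsub, hmeet⟩
    refine ⟨{p ∈ ⋃₀ 𝒜 | f p ∈ C}, ⟨fun p hp => hp.1, ?_⟩, ?_⟩
    · intro S hS
      obtain ⟨c, hcF, hcC⟩ := hmeet (f '' S) ⟨S, hS, rfl⟩
      obtain ⟨p, hpS, rfl⟩ := hcF
      exact ⟨p, hpS, ⟨S, hS, hpS⟩, hcC⟩
    · apply Set.Subset.antisymm
      · rintro y ⟨p, hp, rfl⟩; exact hp.2
      · intro c hc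
        obtain ⟨T, ⟨S, hS, rfl⟩, p, hpS, rfl⟩ := hsub hc
        exact ⟨p, ⟨⟨S, hS, hpS⟩, hc⟩, rfl⟩
  · rintro ⟨B, ⟨hsub, hmeet⟩, rfl⟩
    constructor
    · rintro y ⟨p, hpB, rfl⟩
      obtain ⟨S, hS, hpS⟩ := hsub hpB
      exact ⟨f '' S, ⟨S, hS, rfl⟩, p, hpS, rfl⟩
    · rintro T ⟨S, hS, rfl⟩
      obtain ⟨p, hpS, hpB⟩ := hmeet S hS
      exact ⟨f p, ⟨p, hpS, rfl⟩, p, hpB, rfl⟩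

/-- The Yang–Baxter diagram for `(δ, σ, τ)` commutes. -/
theorem yang_baxter {A X : Type*} (𝒮 : Set (Set (Prop × (A → X)))) :
    Mdelta (sigma (tau '' 𝒮)) = tau (sigma '' delta 𝒮) := by
  refine Prod.ext ?_ ?_
  · show (∀ q ∈ tau '' 𝒮, q.1) = (∃ q ∈ sigma '' delta 𝒮, q.1)
    apply propext
    constructor
    · intro h
      refine ⟨sigma {p ∈ ⋃₀ 𝒮 | p.1}, ⟨{p ∈ ⋃₀ 𝒮 | p.1}, ⟨fun p hp => hp.1, ?_⟩, rfl⟩,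
        fun p hp => hp.2⟩
      intro S hS
      obtain ⟨p, hpS, hp1⟩ := h (tau S) ⟨S, hS, rfl⟩
      exact ⟨p, hpS, ⟨S, hS, hpS⟩, hp1⟩
    · rintro ⟨q, ⟨B, ⟨hsub, hmeet⟩, rfl⟩, hall⟩ T ⟨S, hS, rfl⟩
      obtain ⟨p, hpS, hpB⟩ := hmeet S hS
      exact ⟨p, hpS, hall p hpB⟩
  · funext a
    show delta ((fun q : Prop × (A → Set X) => q.2 a) '' (tau '' 𝒮))
        = (fun q : Prop × (A → Set X) => q.2 a) '' (sigma '' delta 𝒮)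
    rw [Set.image_image, Set.image_image]
    exact delta_image (fun p : Prop × (A → X) => p.2 a) 𝒮
end

section
/- Determinization formula for alternating automata: for every set X, every U : Set X and every t : X → Set (Set X), the image under ⋃₀ of δ_{Set X} applied to {t x | x ∈ U} equals the set of unions of choice functions into the unions-closures: {⋃₀ 𝒦 | 𝒦 ∈ δ_{Set X}({t x | x ∈ U})} = {⋃_{x ∈ U} K x | K : X → Set X such that for every x ∈ U, K x ∈ unions(t x)}. -/
/-- Closure of a family of sets under nonempty unions. -/
def unions {X : Type*} (𝒜 : Set (Set X)) : Set (Set X) :=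
  {C | ∃ ℬ ⊆ 𝒜, ℬ.Nonempty ∧ C = ⋃₀ ℬ}

/-- Determinization formula for alternating automata. -/
theorem determinization_formula {X : Type*} (U : Set X) (t : X → Set (Set X)) :
    Set.sUnion '' delta ((fun x => t x) '' U) =
      {V : Set X | ∃ K : X → Set X, (∀ x ∈ U, K x ∈ unions (t x)) ∧
        V = ⋃ x ∈ U, K x} := by
  ext V
  constructor
  · rintro ⟨𝒦, ⟨hsub, hmeet⟩, rfl⟩
    refine ⟨fun x => ⋃₀ (t x ∩ 𝒦), fun x hx => ⟨t x ∩ 𝒦, Set.inter_subset_left,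
      hmeet (t x) ⟨x, hx, rfl⟩, rfl⟩, ?_⟩
    apply Set.Subset.antisymm
    · intro a ha
      obtain ⟨B, hB𝒦, haB⟩ := ha
      obtain ⟨A, ⟨x, hx, rfl⟩, hBA⟩ := hsub hB𝒦
      exact Set.mem_biUnion hx ⟨B, ⟨hBA, hB𝒦⟩, haB⟩
    · intro a ha
      simp only [Set.mem_iUnion] at ha
      obtain ⟨x, hx, B, ⟨_, hB𝒦⟩, haB⟩ := ha
      exact ⟨B, hB𝒦, haB⟩
  · rintro ⟨K, hK, rfl⟩
    choose ℬ hℬsub hℬne hℬeq using hK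
    refine ⟨⋃ x ∈ U, ⋃ (h : x ∈ U), ℬ x h, ⟨?_, ?_⟩, ?_⟩
    · intro B hB
      simp only [Set.mem_iUnion] at hB
      obtain ⟨x, hx, _, hB⟩ := hB
      exact ⟨t x, ⟨x, hx, rfl⟩, hℬsub x hx hB⟩
    · rintro A ⟨x, hx, rfl⟩
      obtain ⟨B, hB⟩ := hℬne x hx
      exact ⟨B, hℬsub x hx hB, by simp only [Set.mem_iUnion]; exact ⟨x, hx, hx, hB⟩⟩
    · ext a
      simp only [Set.mem_sUnion, Set.mem_iUnion]
      constructor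
      · rintro ⟨B, ⟨x, hx, _, hB⟩, haB⟩
        exact ⟨x, hx, by rw [hℬeq x hx]; exact ⟨B, hB, haB⟩⟩
      · rintro ⟨x, hx, ha⟩
        rw [hℬeq x hx] at ha
        obtain ⟨B, hB, haB⟩ := ha
        exact ⟨B, ⟨x, hx, hx, hB⟩, haB⟩
end

section
/- Soundness of the powerset construction for alternating automata: for every word w : List A and every U : Set X, ⟦U⟧⁺(w) holds if and only if ⟦x⟧(w) holds for every x ∈ U. In particular, ⟦{x}⟧⁺(w) ↔ ⟦x⟧(w) for all x ∈ X and w : List A. -/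
/-- The language of an alternating automaton with outputs `o` and transitions `t`. -/
def altLang {X A : Type*} (o : X → Prop) (t : X → A → Set (Set X)) :
    X → List A → Prop
  | x, [] => o x
  | x, a :: w => ∃ U ∈ t x a, ∀ y ∈ U, altLang o t y w

/-- The output of the determinized automaton. -/
def oPlus {X : Type*} (o : X → Prop) (U : Set X) : Prop := ∀ x ∈ U, o x

/-- The transitions of the determinized automaton. -/
def tPlus {X A : Type*} (t : X → A → Set (Set X)) (U : Set X) (a : A) :
    Set (Set X) :=
  {V | ∃ K : X → Set X, (∀ x ∈ U, K x ∈ unions (t x a)) ∧ V = ⋃ x ∈ U, K x}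

/-- The non-deterministic language of the determinized automaton. -/
def ndLang {X A : Type*} (o : X → Prop) (t : X → A → Set (Set X)) :
    Set X → List A → Prop
  | U, [] => oPlus o U
  | U, a :: w => ∃ W ∈ tPlus t U a, ndLang o t W w

/-- Soundness of the powerset construction for alternating automata. -/
theorem determinization_sound {X A : Type*} (o : X → Prop)
    (t : X → A → Set (Set X)) :
    (∀ (w : List A) (U : Set X), ndLang o t U w ↔ ∀ x ∈ U, altLang o t x w) ∧
      (∀ (x : X) (w : List A), ndLang o t {x} w ↔ altLang o t x w) := by
  have main : ∀ (w : List A) (U : Set X),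
      ndLang o t U w ↔ ∀ x ∈ U, altLang o t x w := by
    intro w
    induction w with
    | nil => intro U; exact Iff.rfl
    | cons a w ih =>
      intro U
      constructor
      · rintro ⟨W, ⟨K, hK, rfl⟩, hW⟩ x hx
        obtain ⟨ℬ, hℬ, ⟨B, hB⟩, hKx⟩ := hK x hx
        refine ⟨B, hℬ hB, fun y hy => ?_⟩
        have hyW : y ∈ ⋃ x ∈ U, K x := by
          refine Set.mem_biUnion hx ?_
          rw [hKx]; exact ⟨B, hB, hy⟩
        exact (ih _).mp hW y hyW
      · intro h
        choose V hV hVall using h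
        refine ⟨⋃ x ∈ U, ⋃ h : x ∈ U, V x h, ⟨fun x => ⋃ h : x ∈ U, V x h,
          fun x hx => ⟨{V x hx}, by simpa using hV x hx, ⟨_, rfl⟩, by
            ext y; simp [hx]⟩, rfl⟩, ?_⟩
        refine (ih _).mpr ?_
        intro y hy
        simp only [Set.mem_iUnion] at hy
        obtain ⟨x, hx, _, hyV⟩ := hy
        exact hVall x hx y hyV
  exact ⟨main, fun x w => by rw [main]; simp⟩
end

section
/- Bialgebra law for determinized alternating automata: for every 𝒰 : Set (Set X) and every a ∈ A, (1) o⁺(⋃₀ 𝒰) holds iff o⁺(U) holds for every U ∈ 𝒰, and (2) t⁺(⋃₀ 𝒰)(a) = {⋃₀ 𝒦 | 𝒦 ∈ δ_{Set X}({t⁺(U)(a) | U ∈ 𝒰})}, i.e. the determinized transitions of a union of state-sets are obtained by applying δ at Set X to the family of determinized transition sets and then taking unions memberwise. -/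
lemma unions_sUnion {X : Type*} {𝒜 S : Set (Set X)} (hS : S ⊆ unions 𝒜)
    (hne : S.Nonempty) : ⋃₀ S ∈ unions 𝒜 := by
  refine ⟨{D | D ∈ 𝒜 ∧ ∃ C ∈ S, D ⊆ C}, fun D hD => hD.1, ?_, ?_⟩
  · obtain ⟨C, hC⟩ := hne
    obtain ⟨ℬ, hℬ𝒜, ⟨D, hD⟩, hCeq⟩ := hS hC
    exact ⟨D, hℬ𝒜 hD, C, hC, hCeq ▸ Set.subset_sUnion_of_mem hD⟩
  · apply Set.Subset.antisymm
    · rintro y ⟨C, hC, hy⟩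
      obtain ⟨ℬ, hℬ𝒜, -, rfl⟩ := hS hC
      obtain ⟨D, hD, hyD⟩ := hy
      exact ⟨D, ⟨hℬ𝒜 hD, _, hC, Set.subset_sUnion_of_mem hD⟩, hyD⟩
    · rintro y ⟨D, ⟨-, C, hC, hDC⟩, hy⟩
      exact ⟨C, hC, hDC hy⟩

/-- Bialgebra law for determinized alternating automata. -/
theorem bialgebra_law {X A : Type*} (o : X → Prop) (t : X → A → Set (Set X))
    (𝒰 : Set (Set X)) (a : A) :
    (oPlus o (⋃₀ 𝒰) ↔ ∀ U ∈ 𝒰, oPlus o U) ∧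
      tPlus t (⋃₀ 𝒰) a = Set.sUnion '' delta ((fun U => tPlus t U a) '' 𝒰) := by
  constructor
  · constructor
    · intro h U hU x hx; exact h x ⟨U, hU, hx⟩
    · rintro h x ⟨U, hU, hx⟩; exact h U hU x hx
  · ext W
    constructor
    · rintro ⟨K, hK, rfl⟩
      refine ⟨{V | ∃ U ∈ 𝒰, V = ⋃ x ∈ U, K x}, ⟨?_, ?_⟩, ?_⟩
      · rintro V ⟨U, hU, rfl⟩
        exact ⟨tPlus t U a, ⟨U, hU, rfl⟩, K, fun x hx => hK x ⟨U, hU, hx⟩, rfl⟩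
      · rintro B ⟨U, hU, rfl⟩
        exact ⟨⋃ x ∈ U, K x, ⟨K, fun x hx => hK x ⟨U, hU, hx⟩, rfl⟩, U, hU, rfl⟩
      · ext y
        simp only [Set.mem_sUnion, Set.mem_setOf_eq, Set.mem_iUnion]
        constructor
        · rintro ⟨V, ⟨U, hU, rfl⟩, hy⟩
          simp only [Set.mem_iUnion] at hy
          obtain ⟨x, hx, hyx⟩ := hy
          exact ⟨x, ⟨U, hU, hx⟩, hyx⟩
        · rintro ⟨x, ⟨U, hU, hx⟩, hyx⟩
          exact ⟨⋃ x ∈ U, K x, ⟨U, hU, rfl⟩, Set.mem_iUnion.2 ⟨x, Set.mem_iUnion.2 ⟨hx, hyx⟩⟩⟩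
    · rintro ⟨ℬ, ⟨hsub, hmeet⟩, rfl⟩
      classical
      set K : X → Set X := fun x => ⋃₀ {C | C ∈ unions (t x a) ∧ C ⊆ ⋃₀ ℬ} with hKdef
      have hfam : ∀ x ∈ ⋃₀ 𝒰, {C | C ∈ unions (t x a) ∧ C ⊆ ⋃₀ ℬ}.Nonempty := by
        rintro x ⟨U, hU, hx⟩
        obtain ⟨V, hVt, hVℬ⟩ := hmeet (tPlus t U a) ⟨U, hU, rfl⟩
        obtain ⟨K', hK', rfl⟩ := hVt
        refine ⟨K' x, hK' x hx, fun y hy => ⟨_, hVℬ, ?_⟩⟩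
        exact Set.mem_iUnion.2 ⟨x, Set.mem_iUnion.2 ⟨hx, hy⟩⟩
      refine ⟨K, fun x hx => unions_sUnion (fun C hC => hC.1) (hfam x hx), ?_⟩
      apply Set.Subset.antisymm
      · rintro y ⟨V, hVℬ, hy⟩
        obtain ⟨T, ⟨U, hU, rfl⟩, hVT⟩ := hsub hVℬ
        obtain ⟨K', hK', rfl⟩ := hVT
        rw [Set.mem_iUnion₂] at hy
        obtain ⟨x, hx, hyx⟩ := hy
        refine Set.mem_iUnion₂.2 ⟨x, ⟨U, hU, hx⟩, ?_⟩
        refine ⟨K' x, ⟨hK' x hx, fun z hz => ⟨_, hVℬ, ?_⟩⟩, hyx⟩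
        exact Set.mem_iUnion₂.2 ⟨x, hx, hz⟩
      · rintro y hy
        rw [Set.mem_iUnion₂] at hy
        obtain ⟨x, hx, hyx⟩ := hy
        obtain ⟨C, hC, hyC⟩ := hyx
        exact hC.2 hyC
end

section
/- Compatibility of union closure for determinized alternating automata: for every relation R : Set (Set X × Set X), Ctx(B(R)) ⊆ B(Ctx(R)), where B is the relation lifting determined by the determinized automaton and Ctx is union closure. Explicitly: if S ⊆ B(R), then the pair (⋃₀ (Prod.fst '' S), ⋃₀ (Prod.snd '' S)) belongs to B(Ctx(R)). -/
/-- The relation lifting (Milner–Park bisimulation functional) determined by the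
determinized alternating automaton. -/
def Blift {X A : Type*} (o : X → Prop) (t : X → A → Set (Set X))
    (R : Set (Set X × Set X)) : Set (Set X × Set X) :=
  {p | (oPlus o p.1 ↔ oPlus o p.2) ∧
    ∀ a : A,
      (∀ U' ∈ tPlus t p.1 a, ∃ V' ∈ tPlus t p.2 a, (U', V') ∈ R) ∧
      (∀ V' ∈ tPlus t p.2 a, ∃ U' ∈ tPlus t p.1 a, (U', V') ∈ R)}

/-- Union closure of a relation on subsets. -/
def Ctx {X : Type*} (R : Set (Set X × Set X)) : Set (Set X × Set X) :=
  {q | ∃ S ⊆ R, q = (⋃₀ (Prod.fst '' S), ⋃₀ (Prod.snd '' S))}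

open Set in
/-- Key lemma: a simulation step for unions of families. -/
lemma union_key {X A : Type*} {t : X → A → Set (Set X)} {a : A} {ι : Type*}
    (P Q : ι → Set X) (R : Set (Set X × Set X))
    (h : ∀ i, ∀ U' ∈ tPlus t (P i) a, ∃ V' ∈ tPlus t (Q i) a, (U', V') ∈ R) :
    ∀ U' ∈ tPlus t (⋃ i, P i) a, ∃ V' ∈ tPlus t (⋃ i, Q i) a,
      ∃ W : ι → Set X × Set X, (∀ i, W i ∈ R) ∧
        U' = ⋃ i, (W i).1 ∧ V' = ⋃ i, (W i).2 := by
  rintro U' ⟨K, hK, rfl⟩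
  have h2 : ∀ i, ∃ V' ∈ tPlus t (Q i) a, ((⋃ x ∈ P i, K x), V') ∈ R := by
    intro i
    exact h i _ ⟨K, fun x hx => hK x (mem_iUnion.2 ⟨i, hx⟩), rfl⟩
  choose V' hV' hR using h2
  choose Ki hKi hVeq using hV'
  refine ⟨⋃ y ∈ ⋃ i, Q i, (⋃ i, ⋃ (_ : y ∈ Q i), Ki i y), ?_,
    fun i => ((⋃ x ∈ P i, K x), V' i), hR, ?_, ?_⟩
  · refine ⟨fun y => ⋃ i, ⋃ (_ : y ∈ Q i), Ki i y, ?_, rfl⟩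
    intro y hy
    obtain ⟨i₀, hy₀⟩ := mem_iUnion.1 hy
    have hB : ∀ i, ∀ hq : y ∈ Q i,
        ∃ ℬ ⊆ t y a, ℬ.Nonempty ∧ Ki i y = ⋃₀ ℬ := fun i hq => hKi i y hq
    choose ℬ hℬsub hℬne hℬeq using hB
    refine ⟨⋃ i, ⋃ (hq : y ∈ Q i), ℬ i hq, ?_, ?_, ?_⟩
    · exact iUnion_subset fun i => iUnion_subset fun hq => hℬsub i hq
    · obtain ⟨B, hB⟩ := hℬne i₀ hy₀
      exact ⟨B, mem_iUnion.2 ⟨i₀, mem_iUnion.2 ⟨hy₀, hB⟩⟩⟩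
    · rw [sUnion_iUnion]
      refine iUnion_congr fun i => ?_
      rw [sUnion_iUnion]
      exact iUnion_congr fun hq => hℬeq i hq
  · rw [biUnion_iUnion]
  · simp only [hVeq, biUnion_iUnion]
    ext z
    simp only [mem_iUnion]
    constructor
    · rintro ⟨i, y, hy, j, hyj, hz⟩
      exact ⟨j, y, hyj, hz⟩
    · rintro ⟨i, y, hy, hz⟩
      exact ⟨i, y, hy, i, hy, hz⟩

open Set in
/-- Compatibility of union closure for determinized alternating automata. -/
theorem union_closure_compatible {X A : Type*} (o : X → Prop)
    (t : X → A → Set (Set X)) (R : Set (Set X × Set X)) :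
    Ctx (Blift o t R) ⊆ Blift o t (Ctx R) := by
  rintro q ⟨S, hS, rfl⟩
  have hfst : ⋃₀ (Prod.fst '' S) = ⋃ i : S, (i : Set X × Set X).1 := by
    rw [sUnion_image, biUnion_eq_iUnion]
  have hsnd : ⋃₀ (Prod.snd '' S) = ⋃ i : S, (i : Set X × Set X).2 := by
    rw [sUnion_image, biUnion_eq_iUnion]
  constructor
  · -- outputs
    simp only [hfst, hsnd]
    constructor
    · intro h y hy
      obtain ⟨i, hyi⟩ := mem_iUnion.1 hy
      exact ((hS i.2).1).mp (fun x hx => h x (mem_iUnion.2 ⟨i, hx⟩)) y hyi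
    · intro h x hx
      obtain ⟨i, hxi⟩ := mem_iUnion.1 hx
      exact ((hS i.2).1).mpr (fun y hy => h y (mem_iUnion.2 ⟨i, hy⟩)) x hxi
  · intro a
    constructor
    · intro U' hU'
      rw [hfst] at hU'
      obtain ⟨V', hV', W, hW, hU'eq, hV'eq⟩ :=
        union_key (fun i : S => (i : Set X × Set X).1)
          (fun i : S => (i : Set X × Set X).2) R
          (fun i => ((hS i.2).2 a).1) U' hU'
      refine ⟨V', by rwa [hsnd], Set.range W, ?_, ?_⟩
      · rintro p ⟨i, rfl⟩; exact hW i
      · rw [← range_comp, ← range_comp, sUnion_range, sUnion_range]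
        exact Prod.ext hU'eq hV'eq
    · intro V' hV'
      rw [hsnd] at hV'
      obtain ⟨U', hU', W, hW, hV'eq, hU'eq⟩ :=
        union_key (fun i : S => (i : Set X × Set X).2)
          (fun i : S => (i : Set X × Set X).1) {q | (q.2, q.1) ∈ R}
          (fun i V' hV' => ((hS i.2).2 a).2 V' hV') V' hV'
      refine ⟨U', by rwa [hfst], Set.range (fun i => ((W i).2, (W i).1)), ?_, ?_⟩
      · rintro p ⟨i, rfl⟩; exact hW i
      · rw [← range_comp, ← range_comp, sUnion_range, sUnion_range]
        exact Prod.ext hU'eq hV'eq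
end

section
/- Compatibility of convex hull for belief-state transformers of probabilistic automata: for every relation R : Set (PMF X × PMF X), Ctx(B(R)) ⊆ B(Ctx(R)). Explicitly: if Θ : PMF (PMF X × PMF X) has finite support contained in B(R), then the pair (Θ.bind Prod.fst, Θ.bind Prod.snd) belongs to B(Ctx(R)). -/
/-
Let `Θ` be a finite mixture of pairs in `B(R)`. A move of the first marginal restricts to a move
of each first component, which the matching second component answers inside `R`; mixing the
restricted moves and the answers with the weights of `Θ` gives a pair in `Ctx(R)`. The mixed
answer is a move of the second marginal by Bayes' rule: at a state `x` it averages the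
componentwise choices against the posterior probability of each pair given `x`, and such an
average stays in the convex hull of `c x a`. The other direction is the same argument applied
to the swapped pairs.
-/

/-- The convex hull of a set of probability mass functions. -/
def convHullPMF {X : Type*} (T : Set (PMF X)) : Set (PMF X) :=
  {μ | ∃ Θ : PMF (PMF X), Θ.support.Finite ∧ Θ.support ⊆ T ∧ μ = Θ.bind id}

/-- The belief-state transformer (determinization) of a probabilistic automaton. -/
def cPlus {X A : Type*} (c : X → A → Set (PMF X)) (φ : PMF X) (a : A) :
    Set (PMF X) :=
  {μ | ∃ h : X → PMF X, (∀ x ∈ φ.support, h x ∈ convHullPMF (c x a)) ∧ μ = φ.bind h}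

/-- The relation lifting determined by the belief-state transformer. -/
def BliftPMF {X A : Type*} (c : X → A → Set (PMF X)) (R : Set (PMF X × PMF X)) :
    Set (PMF X × PMF X) :=
  {p | p.1.support.Finite ∧ p.2.support.Finite ∧
    ∀ a : A,
      (∀ φ' ∈ cPlus c p.1 a, ∃ ψ' ∈ cPlus c p.2 a, (φ', ψ') ∈ R) ∧
      (∀ ψ' ∈ cPlus c p.2 a, ∃ φ' ∈ cPlus c p.1 a, (φ', ψ') ∈ R)}

/-- Convex hull closure of a relation on probability mass functions. -/
def CtxPMF {X : Type*} (R : Set (PMF X × PMF X)) : Set (PMF X × PMF X) :=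
  {q | ∃ Θ : PMF (PMF X × PMF X), Θ.support.Finite ∧ Θ.support ⊆ R ∧
    q = (Θ.bind Prod.fst, Θ.bind Prod.snd)}

namespace PMF

variable {α β γ : Type*}

theorem bind_congr_of_support (p : PMF α) {f g : α → PMF β}
    (h : ∀ a ∈ p.support, f a = g a) : p.bind f = p.bind g := by
  ext b
  refine tsum_congr fun a => ?_
  by_cases ha : a ∈ p.support
  · rw [h a ha]
  · rw [(p.apply_eq_zero_iff a).2 ha, zero_mul, zero_mul]

theorem support_bind_finite {p : PMF α} (hp : p.support.Finite) {f : α → PMF β}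
    (hf : ∀ a ∈ p.support, (f a).support.Finite) : (p.bind f).support.Finite := by
  rw [support_bind]
  exact hp.biUnion hf

open Classical in
/-- The posterior of the prior `p` given the observation `b` of the channel `μ`; it is junk
(the prior itself) when `b` cannot be observed. -/
noncomputable def posterior (p : PMF α) (μ : α → PMF β) (b : β) : PMF α :=
  if hb : b ∈ (p.bind μ).support then
    normalize (fun a => p a * μ a b) (by rwa [← bind_apply, ← mem_support_iff])
      (by rw [← bind_apply]; exact apply_ne_top _ _)
  else p

variable {p : PMF α} {μ : α → PMF β} {b : β}

theorem posterior_apply (hb : b ∈ (p.bind μ).support) (a : α) :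
    p.posterior μ b a = p a * μ a b * ((p.bind μ) b)⁻¹ := by
  rw [posterior, dif_pos hb, normalize_apply]
  rfl

theorem support_posterior_subset (hb : b ∈ (p.bind μ).support) :
    (p.posterior μ b).support ⊆ {a | a ∈ p.support ∧ b ∈ (μ a).support} := by
  intro a ha
  rw [mem_support_iff, posterior_apply hb] at ha
  simp only [mem_support_iff, Set.mem_ofPred_eq]
  constructor <;> rintro h0 <;> simp [h0] at ha

/-- Bayes' rule. -/
theorem bind_bind_posterior (p : PMF α) (μ : α → PMF β) (f : α → β → PMF γ) :
    (p.bind μ).bind (fun b => (p.posterior μ b).bind fun a => f a b) =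
      p.bind fun a => (μ a).bind (f a) := by
  ext c
  simp only [bind_apply, ← ENNReal.tsum_mul_left]
  conv_rhs => rw [ENNReal.tsum_comm]
  refine tsum_congr fun b => ?_
  by_cases hb : b ∈ (p.bind μ).support
  · refine tsum_congr fun a => ?_
    rw [posterior_apply hb]
    calc (p.bind μ) b * (p a * μ a b * ((p.bind μ) b)⁻¹ * f a b c)
        = ((p.bind μ) b * ((p.bind μ) b)⁻¹) * (p a * (μ a b * f a b c)) := by ring
      _ = p a * (μ a b * f a b c) := by
        rw [ENNReal.mul_inv_cancel ((mem_support_iff _ _).1 hb) (apply_ne_top _ _), one_mul]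
  · have hzero : ∀ a, p a * μ a b = 0 := ENNReal.tsum_eq_zero.1 ((apply_eq_zero_iff _ _).2 hb)
    simp only [← mul_assoc, hzero, tsum_zero, zero_mul]

end PMF

section BeliefStates

variable {X A α : Type*} {c : X → A → Set (PMF X)} {a : A}

theorem bind_id_mem_convHullPMF {T : Set (PMF X)} {Λ : PMF (PMF X)} (hfin : Λ.support.Finite)
    (hsub : Λ.support ⊆ convHullPMF T) : Λ.bind id ∈ convHullPMF T := by
  have : Nonempty (PMF (PMF X)) := ⟨Λ⟩
  choose! F hF using fun μ (hμ : μ ∈ Λ.support) => hsub hμ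
  refine ⟨Λ.bind F, PMF.support_bind_finite hfin fun μ hμ => (hF μ hμ).1, ?_, ?_⟩
  · rw [PMF.support_bind]
    exact Set.iUnion₂_subset fun μ hμ => (hF μ hμ).2.1
  · rw [PMF.bind_bind]
    exact PMF.bind_congr_of_support Λ fun μ hμ => (hF μ hμ).2.2

theorem bind_mem_cPlus_of_support_subset {φ ψ : PMF X} {h : X → PMF X}
    (hh : ∀ x ∈ φ.support, h x ∈ convHullPMF (c x a)) (hψ : ψ.support ⊆ φ.support) :
    ψ.bind h ∈ cPlus c ψ a :=
  ⟨h, fun x hx => hh x (hψ hx), rfl⟩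

theorem bind_mem_cPlus_bind {Θ : PMF α} (hΘ : Θ.support.Finite) {μ ν : α → PMF X}
    (hν : ∀ p ∈ Θ.support, ν p ∈ cPlus c (μ p) a) : Θ.bind ν ∈ cPlus c (Θ.bind μ) a := by
  have : Nonempty (X → PMF X) := ⟨PMF.pure⟩
  choose! g hg hνg using hν
  refine ⟨fun x => (Θ.posterior μ x).bind fun p => g p x, fun x hx => ?_, ?_⟩
  · show ((Θ.posterior μ x).bind fun p => g p x) ∈ _
    have hpost := PMF.support_posterior_subset hx
    have hmix : ((Θ.posterior μ x).bind fun p => g p x) =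
        ((Θ.posterior μ x).map fun p => g p x).bind id := by
      rw [PMF.bind_map]
      rfl
    rw [hmix]
    refine bind_id_mem_convHullPMF ?_ ?_ <;> rw [PMF.support_map]
    · exact (hΘ.subset fun p hp => (hpost hp).1).image _
    · rintro _ ⟨p, hp, rfl⟩
      exact hg p (hpost hp).1 x (hpost hp).2
  · rw [PMF.bind_bind_posterior, PMF.bind_congr_of_support Θ hνg]

theorem exists_mem_cPlus_mem_ctxPMF {Θ : PMF α} (hΘ : Θ.support.Finite) {μ ν : α → PMF X}
    {R : Set (PMF X × PMF X)}
    (hsim : ∀ p ∈ Θ.support, ∀ φ' ∈ cPlus c (μ p) a, ∃ ψ' ∈ cPlus c (ν p) a, (φ', ψ') ∈ R) :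
    ∀ φ' ∈ cPlus c (Θ.bind μ) a, ∃ ψ' ∈ cPlus c (Θ.bind ν) a, (φ', ψ') ∈ CtxPMF R := by
  rintro _ ⟨h, hh, rfl⟩
  have hrestrict : ∀ p ∈ Θ.support, (μ p).bind h ∈ cPlus c (μ p) a := fun p hp =>
    bind_mem_cPlus_of_support_subset hh fun x hx => by
      rw [PMF.support_bind]
      exact Set.mem_biUnion hp hx
  have : Nonempty (PMF X) := ⟨Θ.bind μ⟩
  choose! ψ hψ hR using fun p hp => hsim p hp _ (hrestrict p hp)
  refine ⟨Θ.bind ψ, bind_mem_cPlus_bind hΘ hψ,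
    Θ.map fun p => ((μ p).bind h, ψ p), ?_, ?_, ?_⟩
  · rw [PMF.support_map]
    exact hΘ.image _
  · rw [PMF.support_map]
    rintro _ ⟨p, hp, rfl⟩
    exact hR p hp
  · rw [PMF.bind_map, PMF.bind_map, PMF.bind_bind]
    rfl

theorem mem_ctxPMF_of_swap {R : Set (PMF X × PMF X)} {φ ψ : PMF X}
    (h : (ψ, φ) ∈ CtxPMF (Prod.swap ⁻¹' R)) : (φ, ψ) ∈ CtxPMF R := by
  obtain ⟨Θ, hfin, hsub, heq⟩ := h
  obtain ⟨rfl, rfl⟩ := Prod.mk.inj heq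
  refine ⟨Θ.map Prod.swap, ?_, ?_, ?_⟩
  · rw [PMF.support_map]
    exact hfin.image _
  · rw [PMF.support_map]
    rintro _ ⟨q, hq, rfl⟩
    exact hsub hq
  · rw [PMF.bind_map, PMF.bind_map]
    rfl

end BeliefStates

theorem convex_hull_compatible_general {X A : Type*} (c : X → A → Set (PMF X))
    (R : Set (PMF X × PMF X)) :
    CtxPMF (BliftPMF c R) ⊆ BliftPMF c (CtxPMF R) := by
  rintro _ ⟨Θ, hfin, hsub, rfl⟩
  refine ⟨PMF.support_bind_finite hfin fun p hp => (hsub hp).1,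
    PMF.support_bind_finite hfin fun p hp => (hsub hp).2.1, fun a => ⟨?_, ?_⟩⟩
  · exact exists_mem_cPlus_mem_ctxPMF hfin fun p hp => ((hsub hp).2.2 a).1
  · intro ψ' hψ'
    obtain ⟨φ', hφ', hctx⟩ := exists_mem_cPlus_mem_ctxPMF (R := Prod.swap ⁻¹' R) hfin
      (fun p hp => ((hsub hp).2.2 a).2) ψ' hψ'
    exact ⟨φ', hφ', mem_ctxPMF_of_swap hctx⟩

/-- Compatibility of convex hull for belief-state transformers of probabilistic
automata. -/
theorem convex_hull_compatible {X A : Type*} (c : X → A → Set (PMF X))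
    (hc : ∀ (x : X) (a : A), ∀ ψ ∈ c x a, ψ.support.Finite)
    (R : Set (PMF X × PMF X)) :
    CtxPMF (BliftPMF c R) ⊆ BliftPMF c (CtxPMF R) :=
  convex_hull_compatible_general c R
end

section
/- The support map is a morphism of weak distributive laws: let X be a set and Φ : PMF (Set X) be such that the support of Φ is finite and every A in the support of Φ is a finite set. Then {B : Set X | B ⊆ ⋃₀ (support of Φ) and for every A in the support of Φ, A ∩ B is nonempty} = PMF.support '' {Φ.bind f | f : Set X → PMF X such that for every A in the support of Φ, the support of f A is contained in A}. That is, applying the powerset-over-powerset law δ to the support of Φ gives exactly the set of supports of the distributions in the distribution-over-powerset law applied to Φ. -/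
/-!
Both sides are described by `support (Φ.bind f) = ⋃ A ∈ support Φ, support (f A)`.
If each `f A` is supported inside `A`, this union lies in `⋃₀ support Φ` and meets every `A`,
because supports of distributions are nonempty. Conversely, a set `B` meeting every `A` is the
support of `Φ.bind f` when `f A` is the uniform distribution on the finite nonempty set `A ∩ B`.
-/

namespace PMF

variable {X : Type*}

theorem exists_support_eq {s : Set X} (hfin : s.Finite) (hne : s.Nonempty) :
    ∃ p : PMF X, p.support = s :=
  ⟨uniformOfFinset hfin.toFinset (hfin.toFinset_nonempty.2 hne), by
    rw [support_uniformOfFinset, hfin.coe_toFinset]⟩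

theorem support_bind_subset_sUnion {Φ : PMF (Set X)} {f : Set X → PMF X}
    (hf : ∀ A ∈ Φ.support, (f A).support ⊆ A) : (Φ.bind f).support ⊆ ⋃₀ Φ.support := by
  rw [support_bind]
  exact Set.iUnion₂_subset fun A hA => (hf A hA).trans (Set.subset_sUnion_of_mem hA)

theorem inter_support_bind_nonempty {Φ : PMF (Set X)} {f : Set X → PMF X}
    (hf : ∀ A ∈ Φ.support, (f A).support ⊆ A) {A : Set X} (hA : A ∈ Φ.support) :
    (A ∩ (Φ.bind f).support).Nonempty := by
  obtain ⟨x, hx⟩ := (f A).support_nonempty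
  exact ⟨x, hf A hA hx, (mem_support_bind_iff Φ f x).2 ⟨A, hA, hx⟩⟩

theorem support_bind_eq_of_support_eq_inter {Φ : PMF (Set X)} {f : Set X → PMF X} {B : Set X}
    (hB : B ⊆ ⋃₀ Φ.support) (hf : ∀ A ∈ Φ.support, (f A).support = A ∩ B) :
    (Φ.bind f).support = B := by
  ext x
  simp only [mem_support_bind_iff]
  constructor
  · rintro ⟨A, hA, hx⟩
    exact ((hf A hA) ▸ hx).2
  · intro hx
    obtain ⟨A, hA, hxA⟩ := hB hx
    exact ⟨A, hA, (hf A hA) ▸ ⟨hxA, hx⟩⟩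

theorem exists_support_bind_eq {Φ : PMF (Set X)} {B : Set X} (hB : B ⊆ ⋃₀ Φ.support)
    (hmeet : ∀ A ∈ Φ.support, (A ∩ B).Nonempty) (hfin : ∀ A ∈ Φ.support, (A ∩ B).Finite) :
    ∃ f : Set X → PMF X, (∀ A ∈ Φ.support, (f A).support ⊆ A) ∧ (Φ.bind f).support = B := by
  obtain ⟨A₀, hA₀⟩ := Φ.support_nonempty
  obtain ⟨x₀, -⟩ := hmeet A₀ hA₀
  have : Inhabited X := ⟨x₀⟩
  have hex : ∀ A ∈ Φ.support, ∃ p : PMF X, p.support = A ∩ B :=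
    fun A hA => exists_support_eq (hfin A hA) (hmeet A hA)
  choose! f hf using hex
  refine ⟨f, fun A hA => (hf A hA).trans_subset Set.inter_subset_left, ?_⟩
  exact support_bind_eq_of_support_eq_inter hB hf

end PMF

theorem supp_morphism_of_wdl_general {X : Type*} (Φ : PMF (Set X))
    (hfin : ∀ A ∈ Φ.support, A.Finite) :
    {B : Set X | B ⊆ ⋃₀ Φ.support ∧ ∀ A ∈ Φ.support, (A ∩ B).Nonempty} =
      PMF.support ''
        {μ | ∃ f : Set X → PMF X, (∀ A ∈ Φ.support, (f A).support ⊆ A) ∧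
          μ = Φ.bind f} := by
  ext B
  constructor
  · rintro ⟨hB, hmeet⟩
    obtain ⟨f, hf, hsupp⟩ :=
      PMF.exists_support_bind_eq hB hmeet fun A hA => (hfin A hA).inter_of_left B
    exact ⟨Φ.bind f, ⟨f, hf, rfl⟩, hsupp⟩
  · rintro ⟨-, ⟨f, hf, rfl⟩, rfl⟩
    exact ⟨PMF.support_bind_subset_sUnion hf, fun A hA => PMF.inter_support_bind_nonempty hf hA⟩

/-- The support map is a morphism of weak distributive laws: applying the
powerset-over-powerset law to the support of `Φ` gives exactly the set of
supports of the distributions in the distribution-over-powerset law applied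
to `Φ`. -/
theorem supp_morphism_of_wdl {X : Type*} (Φ : PMF (Set X))
    (hΦ : Φ.support.Finite) (hfin : ∀ A ∈ Φ.support, A.Finite) :
    {B : Set X | B ⊆ ⋃₀ Φ.support ∧ ∀ A ∈ Φ.support, (A ∩ B).Nonempty} =
      PMF.support ''
        {μ | ∃ f : Set X → PMF X, (∀ A ∈ Φ.support, (f A).support ⊆ A) ∧
          μ = Φ.bind f} :=
  supp_morphism_of_wdl_general Φ hfin
end

section
/- Well-definedness of the weak lifting of powerset to complete join semilattices: let α be a complete join semilattice (Mathlib's CompleteSemilatticeSup) and let 𝒰 : Set (Set α) be a family such that every U ∈ 𝒰 is closed under nonempty suprema (for all B ⊆ U with B nonempty, sSup B ∈ U). Then the set J := {sSup {g U | U ∈ 𝒰} | g : Set α → α such that g U ∈ U for every U ∈ 𝒰} is itself closed under nonempty suprema: for every nonempty B ⊆ J, sSup B ∈ J. -/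
/-- Well-definedness of the weak lifting of powerset to complete join
semilattices: the set of suprema of images of choice functions is closed
under nonempty suprema. -/
theorem weak_lifting_well_defined {α : Type*} [CompleteSemilatticeSup α]
    (𝒰 : Set (Set α))
    (h𝒰 : ∀ U ∈ 𝒰, ∀ B ⊆ U, B.Nonempty → sSup B ∈ U) :
    ∀ B ⊆ {j : α | ∃ g : Set α → α, (∀ U ∈ 𝒰, g U ∈ U) ∧ j = sSup (g '' 𝒰)},
      B.Nonempty →
        sSup B ∈ {j : α | ∃ g : Set α → α, (∀ U ∈ 𝒰, g U ∈ U) ∧ j = sSup (g '' 𝒰)} := by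
  intro B hB hBne
  choose g hg hgs using fun b (hb : b ∈ B) => hB hb
  classical
  refine ⟨fun U => sSup {a | ∃ b, ∃ hb : b ∈ B, a = g b hb U}, ?_, ?_⟩
  · intro U hU
    apply h𝒰 U hU
    · rintro a ⟨b, hb, rfl⟩; exact hg b hb U hU
    · obtain ⟨b, hb⟩ := hBne; exact ⟨g b hb U, b, hb, rfl⟩
  · apply le_antisymm
    · apply sSup_le
      intro b hb
      rw [hgs b hb]
      apply sSup_le
      rintro a ⟨U, hU, rfl⟩
      have h1 : g b hb U ∈ {a | ∃ b', ∃ hb' : b' ∈ B, a = g b' hb' U} := ⟨b, hb, rfl⟩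
      exact le_trans (le_sSup h1) (le_sSup (Set.mem_image_of_mem _ hU))
    · apply sSup_le
      rintro a ⟨U, hU, rfl⟩
      apply sSup_le
      rintro a ⟨b, hb, rfl⟩
      have h1 : g b hb U ≤ sSup (g b hb '' 𝒰) := le_sSup (Set.mem_image_of_mem _ hU)
      have h2 : sSup (g b hb '' 𝒰) ≤ sSup B := hgs b hb ▸ le_sSup hb
      exact h1.trans h2
end
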